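/- Fix integers n ≥ 2 and even m ≥ 2, set N = m·n, and let g_A, g_B, X be the permutations of ℤ/Nℤ defined in the context. Then X is the unique element of Γ(g_A,e) ∩ Γ(g_B,e) of maximal distance from the identity: for every permutation g ∈ Γ(g_A,e) ∩ Γ(g_B,e) one has d(g,e) ≤ n·(m−2), with equality if and only if g = X. Equivalently, for every g ∈ Γ(g_A,e) ∩ Γ(g_B,e) one has d(g,g_A) ≥ n, with equality if and only if g = X. -/

import Mathlib

noncomputable def cycleCount {α : Type*} (g : Equiv.Perm α) : ℕ :=
  Nat.card (Quotient (Setoid.mk g.SameCycle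
    ⟨fun x => Equiv.Perm.SameCycle.refl g x,
     fun h => h.symm,
     fun h₁ h₂ => h₁.trans h₂⟩))

/-- The Cayley distance `d(g,h) = N - #(g h⁻¹)` on the permutations of a finite set. -/
noncomputable def cayley {α : Type*} (g h : Equiv.Perm α) : ℕ :=
  Nat.card α - cycleCount (g * h⁻¹)

/-- `Γ(g,h)`: the set of permutations on the Cayley geodesic between `g` and `h`. -/
def geodesic {α : Type*} (g h : Equiv.Perm α) : Set (Equiv.Perm α) :=
  {k | cayley g k + cayley k h = cayley g h}

/-!
If `g` lies on a geodesic from `b` to `e`, every cycle of `g` lies inside a cycle of `b`. Indeed,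
write `b = (b g⁻¹) g`: merging the cycles of `g` along the `d(b, g)` transpositions of a
minimal factorisation of `b g⁻¹` loses at most `d(b, g)` classes and yields a partition whose
classes are unions of cycles of `b`; equality in the triangle inequality forces these classes to
be exactly the cycles of `b`.

So the cycles of `g ∈ Γ(g_A, e) ∩ Γ(g_B, e)` lie in the common refinement of the cycle
partitions of `g_A` and `g_B`, the partition into the `2n` half-blocks, which are the cycles of
`X`. Hence `#(g) ≥ 2n`, and both bounds follow from `d(g, e) = N - #(g)` and
`d(g, g_A) = d(g_A, e) - d(g, e)`.

If `#(g) = 2n`, then `d(g, g_B) = n`, so `k = g g_B⁻¹` moves at most `2n` points. But `k` moves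
the images under `g_B` of the `2n` half-block ends, the points where `g_B` leaves the cycle of
`X`; hence it fixes everything else, `g` agrees with `g_B` and `X` away from the half-block ends,
and then also at them.
-/

theorem Nat.mul_add_div_of_lt {q B r : ℕ} (h : r < B) : (q * B + r) / B = q := by
  rw [Nat.add_comm, Nat.add_mul_div_right _ _ (by omega), Nat.div_eq_of_lt h, zero_add]

theorem Nat.div_mul_add_lt_of_dvd {a B N r : ℕ} (ha : a < N) (hBN : B ∣ N) (hr : r < B) :
    a / B * B + r < N := by
  have h := Nat.div_lt_div_of_lt_of_dvd hBN ha
  calc a / B * B + r < (a / B + 1) * B := by rw [add_one_mul]; omega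
    _ ≤ N / B * B := Nat.mul_le_mul_right B h
    _ = N := Nat.div_mul_cancel hBN

theorem Nat.eq_of_div_two_eq_of_pred_mod_div_two_eq {n i j : ℕ} (hn : 2 ≤ n) (hi : i < 2 * n)
    (hj : j < 2 * n) (h : i / 2 = j / 2)
    (hpred : (i + (2 * n - 1)) % (2 * n) / 2 = (j + (2 * n - 1)) % (2 * n) / 2) : i = j := by
  have hmod : ∀ k < 2 * n, (k + (2 * n - 1)) % (2 * n) = if k = 0 then 2 * n - 1 else k - 1 := by
    intro k hk
    split_ifs with hk0
    · rw [hk0, zero_add, Nat.mod_eq_of_lt (by omega)]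
    · rw [show k + (2 * n - 1) = k - 1 + 2 * n by omega, Nat.add_mod_right,
        Nat.mod_eq_of_lt (by omega)]
  rw [hmod i hi, hmod j hj] at hpred
  split_ifs at hpred <;> omega

open Equiv Function Finset

namespace Equiv.Perm

variable {α β : Type*}

theorem cycleCount_def (σ : Perm α) :
    cycleCount σ = Nat.card (Quotient (SameCycle.setoid σ)) := rfl

theorem cycleCount_le_card [Finite α] (σ : Perm α) : cycleCount σ ≤ Nat.card α :=
  Nat.card_le_card_of_surjective _ Quotient.mk_surjective

theorem cycleCount_inv (σ : Perm α) : cycleCount σ⁻¹ = cycleCount σ :=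
  Nat.card_congr (Quotient.congrRight fun _ _ => sameCycle_inv)

theorem cycleCount_conj (π σ : Perm α) : cycleCount (π * σ * π⁻¹) = cycleCount σ :=
  (Nat.card_congr (Quotient.congr π fun x y => by simp)).symm

theorem cycleCount_le_of_sameCycle {σ τ : Perm α} [Finite α]
    (h : ∀ x y, τ.SameCycle x y → σ.SameCycle x y) : cycleCount σ ≤ cycleCount τ :=
  Nat.card_le_card_of_surjective (Quotient.map id h) fun q =>
    q.inductionOn fun x => ⟨⟦x⟧, rfl⟩

theorem cycleCount_eq_ncard_range {σ : Perm α} {f : α → β}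
    (h : ∀ x y, σ.SameCycle x y ↔ f x = f y) : cycleCount σ = (Set.range f).ncard := by
  rw [cycleCount_def, ← Nat.card_coe_set_eq]
  exact Nat.card_congr ((Quotient.congrRight h).trans (Setoid.quotientKerEquivRange f))

theorem cayley_comm (g h : Perm α) : cayley g h = cayley h g := by
  rw [cayley, cayley, ← cycleCount_inv, mul_inv_rev, inv_inv]

theorem cayley_one_right (g : Perm α) : cayley g 1 = Nat.card α - cycleCount g := by
  rw [cayley, inv_one, mul_one]

theorem SameCycle.apply_eq_of_forall [Finite α] {σ : Perm α} {f : α → β}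
    (hf : ∀ x, f (σ x) = f x) {x y : α} (h : σ.SameCycle x y) : f x = f y := by
  obtain ⟨i, -, rfl⟩ := h.exists_pow_eq'
  clear h
  induction i with
  | zero => rfl
  | succ i ih => rw [ih, pow_succ', mul_apply, hf]

theorem apply_swap_apply_of_apply_eq {f : α → β} [DecidableEq α] {a b : α} (h : f a = f b)
    (x : α) : f (swap a b x) = f x := by
  rw [swap_apply_def]
  split_ifs with ha hb
  · rw [ha, h]
  · rw [hb, h]
  · rfl

theorem cycleCount_lt_swap_mul [Finite α] [DecidableEq α] {σ : Perm α} {x : α}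
    (hx : σ x ≠ x) :
    cycleCount σ < cycleCount (swap x (σ x) * σ) := by
  set ρ := swap x (σ x) * σ
  have hinv : ∀ y, (⟦ρ y⟧ : Quotient (SameCycle.setoid σ)) = ⟦y⟧ := fun y =>
    (apply_swap_apply_of_apply_eq (Quotient.sound (sameCycle_apply_right.mpr (.refl σ x))) _).trans
      (Quotient.sound (sameCycle_apply_left.mpr (.refl σ y)))
  let F : Quotient (SameCycle.setoid ρ) → Quotient (SameCycle.setoid σ) :=
    Quotient.map id fun _ _ h => Quotient.exact (h.apply_eq_of_forall hinv)
  have hsurj : Surjective F := fun q => q.inductionOn fun y => ⟨⟦y⟧, rfl⟩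
  have hnotinj : ¬ Injective F := fun hinj => hx <| Eq.symm <|
    (Quotient.exact (hinj (Quotient.sound (sameCycle_apply_right.mpr (.refl σ x)) :
      F ⟦x⟧ = F ⟦σ x⟧))).eq_of_left (show ρ x = x by simp [ρ])
  classical
  cases nonempty_fintype α
  simpa only [cycleCount_def, Nat.card_eq_fintype_card] using
    Fintype.card_lt_of_surjective_not_injective F hsurj hnotinj

theorem induction_on_swap_mul [Finite α] [DecidableEq α] {motive : Perm α → Prop}
    (one : motive 1) (swap_mul : ∀ σ x, σ x ≠ x → motive (swap x (σ x) * σ) → motive σ)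
    (σ : Perm α) : motive σ := by
  classical
  cases nonempty_fintype α
  induction hk : #σ.support using Nat.strong_induction_on generalizing σ with
  | _ k ih =>
    obtain rfl | ⟨x, hx⟩ := eq_or_ne σ 1 |>.imp id fun h => not_forall.mp (mt Equiv.ext h)
    · exact one
    exact swap_mul σ x hx (ih _ (hk ▸ card_support_swap_mul hx) _ rfl)

theorem card_support_add_two_mul_cycleCount_le [Fintype α] [DecidableEq α] (σ : Perm α) :
    #σ.support + 2 * cycleCount σ ≤ 2 * Nat.card α := by
  induction σ using induction_on_swap_mul with
  | one => simpa using cycleCount_le_card (1 : Perm α)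
  | swap_mul σ x hx ih =>
    have hsupp : #σ.support ≤ 2 + #(swap x (σ x) * σ).support := by
      calc #σ.support = #(swap x (σ x) * (swap x (σ x) * σ)).support := by
            rw [swap_mul_self_mul]
        _ ≤ #((swap x (σ x)).support ∪ (swap x (σ x) * σ).support) :=
            card_le_card (support_mul_le _ _)
        _ ≤ _ := (card_union_le _ _).trans (by rw [card_support_swap (Ne.symm hx)])
    have := cycleCount_lt_swap_mul hx
    omega

theorem sameCycle_of_apply_eq [Finite α] {σ : Perm α} {f : α → β}
    (hf : ∀ x, f (σ x) = f x) (hcard : cycleCount σ ≤ (Set.range f).ncard) {x y : α}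
    (h : f x = f y) : σ.SameCycle x y := by
  let F : Quotient (SameCycle.setoid σ) → Set.range f :=
    Quotient.lift (fun z => ⟨f z, z, rfl⟩) fun _ _ h => Subtype.ext (h.apply_eq_of_forall hf)
  have hsurj : Surjective F := by
    rintro ⟨_, z, rfl⟩
    exact ⟨⟦z⟧, rfl⟩
  have hbij : Bijective F := (Nat.bijective_iff_surjective_and_card F).mpr
    ⟨hsurj, le_antisymm (by rwa [Nat.card_coe_set_eq, ← cycleCount_def])
      (Nat.card_le_card_of_surjective F hsurj)⟩
  exact Quotient.exact (hbij.injective (Subtype.ext h : F ⟦x⟧ = F ⟦y⟧))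

theorem exists_comp_invariant [Finite α] [DecidableEq α] (σ : Perm α) (f : α → β) :
    ∃ φ : β → β, (∀ x, φ (f (σ x)) = φ (f x)) ∧
      cycleCount σ + (Set.range f).ncard ≤ Nat.card α + (Set.range (φ ∘ f)).ncard := by
  classical
  induction σ using induction_on_swap_mul with
  | one => exact ⟨id, fun _ => rfl, by simpa using cycleCount_le_card (1 : Perm α)⟩
  | swap_mul σ a ha ih =>
    obtain ⟨φ, hφ, hcard⟩ := ih
    let ψ : β → β := fun y => if y = φ (f (σ a)) then φ (f a) else y
    have hψ : ψ (φ (f a)) = ψ (φ (f (σ a))) := by simp [ψ]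
    refine ⟨ψ ∘ φ, fun x => ?_, ?_⟩
    · calc ψ (φ (f (σ x))) = ψ (φ (f (swap a (σ a) ((swap a (σ a) * σ) x)))) := by
            rw [mul_apply, swap_apply_self]
        _ = ψ (φ (f ((swap a (σ a) * σ) x))) :=
            apply_swap_apply_of_apply_eq (f := ψ ∘ φ ∘ f) hψ _
        _ = ψ (φ (f x)) := by rw [hφ]
    · have hsub :
          Set.range (φ ∘ f) ⊆ insert (φ (f (σ a))) (Set.range ((ψ ∘ φ) ∘ f)) := by
        rintro _ ⟨z, rfl⟩
        by_cases hz : φ (f z) = φ (f (σ a))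
        · exact Or.inl hz
        · exact Or.inr ⟨z, if_neg hz⟩
      have := (Set.ncard_le_ncard hsub (Set.toFinite _)).trans (Set.ncard_insert_le _ _)
      have := cycleCount_lt_swap_mul ha
      omega

theorem sameCycle_mul_of_cycleCount_add_eq [Finite α] {σ τ : Perm α}
    (h : cycleCount σ + cycleCount τ = Nat.card α + cycleCount (σ * τ)) {x y : α}
    (hxy : τ.SameCycle x y) : (σ * τ).SameCycle x y := by
  classical
  obtain ⟨φ, hφ, hcard⟩ := exists_comp_invariant σ (Quotient.mk (SameCycle.setoid τ))
  have hτ : ∀ z, φ ⟦τ z⟧ = φ ⟦z⟧ := fun z =>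
    congrArg φ (Quotient.sound (sameCycle_apply_left.mpr (.refl τ z)))
  rw [Set.range_quotient_mk, Set.ncard_univ, ← cycleCount_def] at hcard
  exact sameCycle_of_apply_eq (σ := σ * τ) (f := φ ∘ Quotient.mk _)
    (fun z => (hφ (τ z)).trans (hτ z)) (by omega) (congrArg φ (Quotient.sound hxy))

theorem sameCycle_of_mem_geodesic_one [Finite α] {b g : Perm α} (hg : g ∈ geodesic b 1)
    {x y : α} (hxy : g.SameCycle x y) : b.SameCycle x y := by
  have hb := cycleCount_le_card b
  have hg' := cycleCount_le_card g
  have hbg := cycleCount_le_card (b * g⁻¹)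
  simp only [geodesic, cayley, inv_one, mul_one, Set.mem_ofPred_eq] at hg
  simpa only [inv_mul_cancel_right] using
    sameCycle_mul_of_cycleCount_add_eq (σ := b * g⁻¹) (by rw [inv_mul_cancel_right]; omega) hxy

/-- A permutation `g` whose cycles refine those of `X` coincides with `X` as soon as `g B⁻¹` is
too short to do anything but repair the points where `B` leaves the cycles of `X`. -/
theorem eq_of_sameCycle_of_two_mul_cayley_le [Fintype α] [DecidableEq α] {g X B : Perm α}
    (hg : ∀ x, X.SameCycle x (g x)) (hleave : ∀ x, B x ≠ X x → ¬ X.SameCycle x (B x))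
    (hD : ∀ x y, B x ≠ X x → B y ≠ X y → X.SameCycle x y → x = y)
    (hcard : 2 * cayley g B ≤ #{x | B x ≠ X x}) : g = X := by
  rw [cayley, Nat.card_eq_fintype_card] at hcard
  set D : Finset α := {x | B x ≠ X x}
  set k := g * B⁻¹
  have hk : ∀ x, k (B x) = g x := fun x => by simp [k]
  have hsub : D.image B ⊆ k.support := by
    simp only [subset_iff, mem_image, mem_support]
    rintro _ ⟨x, hx, rfl⟩ hfix
    exact hleave x (mem_filter.mp hx).2 (by simpa [← hk x, hfix] using hg x)
  have hsupp : k.support = D.image B := by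
    refine (eq_of_subset_of_card_le hsub ?_).symm
    have hk₁ := card_support_add_two_mul_cycleCount_le k
    have hk₂ := cycleCount_le_card k
    rw [card_image_of_injective _ B.injective]
    rw [Nat.card_eq_fintype_card] at hk₁ hk₂
    omega
  have hoff : ∀ x, x ∉ D → g x = X x := fun x hx => by
    have hBx : B x ∉ k.support := by
      rw [hsupp]
      exact fun h => hx (by simpa [B.injective.eq_iff] using h)
    rw [← hk, notMem_support.mp hBx]
    simpa [D] using hx
  ext x
  by_cases hx : x ∈ D
  · set z := X⁻¹ (g x)
    have hzx : z = x := by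
      by_cases hz : z ∈ D
      · exact (hD x z (mem_filter.mp hx).2 (mem_filter.mp hz).2
          (sameCycle_symm_apply_right.mpr (hg x))).symm
      · exact g.injective ((hoff z hz).trans (X.apply_symm_apply _))
    calc g x = X z := (X.apply_symm_apply _).symm
      _ = X x := by rw [hzx]
  · exact hoff x hx

end Equiv.Perm

open Equiv.Perm

def IsBlockRotation {N : ℕ} (B : ℕ) (σ : Perm (ZMod N)) : Prop :=
  ∀ q r : ℕ, r < B → σ ((q * B + r : ℕ) : ZMod N) = ((q * B + (r + 1) % B : ℕ) : ZMod N)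

namespace IsBlockRotation

variable {N B : ℕ} [NeZero N] {σ : Perm (ZMod N)}

theorem val_apply (hσ : IsBlockRotation B σ) (hBN : B ∣ N) (z : ZMod N) :
    (σ z).val = z.val / B * B + (z.val % B + 1) % B := by
  have hB : 0 < B := Nat.pos_of_dvd_of_pos hBN (NeZero.pos N)
  have hz : z = ((z.val / B * B + z.val % B : ℕ) : ZMod N) := by
    rw [Nat.div_add_mod', ZMod.natCast_zmod_val]
  conv_lhs => rw [hz, hσ _ _ (Nat.mod_lt _ hB)]
  exact ZMod.val_cast_of_lt (Nat.div_mul_add_lt_of_dvd (ZMod.val_lt z) hBN (Nat.mod_lt _ hB))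

theorem val_apply_div (hσ : IsBlockRotation B σ) (hBN : B ∣ N) (z : ZMod N) :
    (σ z).val / B = z.val / B := by
  have hB : 0 < B := Nat.pos_of_dvd_of_pos hBN (NeZero.pos N)
  rw [hσ.val_apply hBN, Nat.mul_add_div_of_lt (Nat.mod_lt _ hB)]

theorem val_apply_of_mod_add_one_lt (hσ : IsBlockRotation B σ) (hBN : B ∣ N) {z : ZMod N}
    (hz : z.val % B + 1 < B) : (σ z).val = z.val + 1 := by
  have := Nat.div_add_mod' z.val B
  rw [hσ.val_apply hBN, Nat.mod_eq_of_lt hz]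
  omega

theorem val_pow_apply (hσ : IsBlockRotation B σ) (hBN : B ∣ N) (z : ZMod N) (i : ℕ) :
    ((σ ^ i) z).val = z.val / B * B + (z.val % B + i) % B := by
  have hB : 0 < B := Nat.pos_of_dvd_of_pos hBN (NeZero.pos N)
  induction i with
  | zero => rw [pow_zero, one_apply, add_zero, Nat.mod_mod, Nat.div_add_mod']
  | succ i ih =>
    rw [pow_succ', mul_apply, hσ.val_apply hBN, ih, Nat.mul_add_div_of_lt (Nat.mod_lt _ hB),
      Nat.mul_add_mod_of_lt (Nat.mod_lt _ hB), Nat.mod_add_mod, add_assoc]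

theorem sameCycle_iff (hσ : IsBlockRotation B σ) (hBN : B ∣ N) {z w : ZMod N} :
    σ.SameCycle z w ↔ z.val / B = w.val / B := by
  have hB : 0 < B := Nat.pos_of_dvd_of_pos hBN (NeZero.pos N)
  refine ⟨fun h => h.apply_eq_of_forall (f := fun z : ZMod N => z.val / B)
    (hσ.val_apply_div hBN), fun h => ?_⟩
  refine ⟨((w.val % B + B - z.val % B : ℕ) : ℤ), ZMod.val_injective N ?_⟩
  have hz := Nat.mod_lt z.val hB
  rw [zpow_natCast, hσ.val_pow_apply hBN, h,
    show z.val % B + (w.val % B + B - z.val % B) = w.val % B + B by omega, Nat.add_mod_right,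
    Nat.mod_mod, Nat.div_add_mod']

theorem cycleCount_eq (hσ : IsBlockRotation B σ) (hBN : B ∣ N) : cycleCount σ = N / B := by
  have hB : 0 < B := Nat.pos_of_dvd_of_pos hBN (NeZero.pos N)
  have hrange : Set.range (fun z : ZMod N => z.val / B) = Finset.range (N / B) := by
    ext j
    simp only [Set.mem_range, Finset.coe_range, Set.mem_Iio]
    refine ⟨fun ⟨z, hz⟩ => hz ▸ Nat.div_lt_div_of_lt_of_dvd hBN (ZMod.val_lt z),
      fun hj => ?_⟩
    have hjB : j * B < N := by
      have := (Nat.lt_div_iff_mul_lt hB).mp hj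
      omega
    exact ⟨(j * B : ℕ), by rw [ZMod.val_cast_of_lt hjB, Nat.mul_div_cancel _ hB]⟩
  rw [cycleCount_eq_ncard_range (fun _ _ => hσ.sameCycle_iff hBN), hrange, Set.ncard_coe_finset,
    Finset.card_range]

end IsBlockRotation

section HalfBlocks

variable {N u n : ℕ} [NeZero N] {gA gB X : Perm (ZMod N)}

theorem val_div_lt (hN : N = 2 * u * n) (hu : 0 < u) (z : ZMod N) : z.val / u < 2 * n := by
  subst hN
  rw [Nat.div_lt_iff_lt_mul hu]
  calc z.val < 2 * u * n := ZMod.val_lt z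
    _ = 2 * n * u := by ring

theorem val_neg_add_div (hN : N = 2 * u * n) (hu : 0 < u) (z : ZMod N) :
    (-(u : ZMod N) + z).val / u = (z.val / u + (2 * n - 1)) % (2 * n) := by
  subst hN
  have hn : 0 < n := Nat.pos_of_ne_zero (by rintro rfl; exact NeZero.ne (2 * u * 0) (by simp))
  have hshift :
      -(u : ZMod (2 * u * n)) + z = ((z.val + (2 * n - 1) * u : ℕ) : ZMod (2 * u * n)) := by
    have hcast : (((2 * n - 1) * u : ℕ) : ZMod (2 * u * n)) = -u := by
      refine eq_neg_of_add_eq_zero_left ?_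
      rw [← Nat.cast_add, ← ZMod.natCast_self (2 * u * n)]
      congr 1
      obtain ⟨k, rfl⟩ := Nat.exists_eq_add_one.mpr hn
      rw [show 2 * (k + 1) - 1 = 2 * k + 1 by omega]
      ring
    rw [Nat.cast_add, hcast, ZMod.natCast_zmod_val, add_comm]
  have hdiv := Nat.mod_mul_right_div_self (z.val + (2 * n - 1) * u) u (2 * n)
  rw [show u * (2 * n) = 2 * u * n by ring] at hdiv
  rw [hshift, ZMod.val_natCast, hdiv, Nat.add_mul_div_right _ _ hu]

theorem IsBlockRotation.val_div_eq_of_sameCycle (hN : N = 2 * u * n) (hn : 2 ≤ n) (hu : 0 < u)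
    (hgB : IsBlockRotation (2 * u) gB)
    (hgA : gA = Equiv.addLeft (u : ZMod N) * gB * (Equiv.addLeft (u : ZMod N))⁻¹) {z w : ZMod N}
    (hB : gB.SameCycle z w) (hA : gA.SameCycle z w) : z.val / u = w.val / u := by
  have hdvd : 2 * u ∣ N := ⟨n, hN⟩
  have hdiv : ∀ a : ZMod N, a.val / (2 * u) = a.val / u / 2 := fun a => by
    rw [Nat.div_div_eq_div_mul, mul_comm]
  rw [hgA, sameCycle_conj] at hA
  rw [hgB.sameCycle_iff hdvd, hdiv, hdiv] at hB hA
  rw [show (Equiv.addLeft (u : ZMod N))⁻¹ z = -(u : ZMod N) + z from rfl,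
    show (Equiv.addLeft (u : ZMod N))⁻¹ w = -(u : ZMod N) + w from rfl,
    val_neg_add_div hN hu, val_neg_add_div hN hu] at hA
  exact Nat.eq_of_div_two_eq_of_pred_mod_div_two_eq hn (val_div_lt hN hu z) (val_div_lt hN hu w)
    hB hA

theorem IsBlockRotation.val_apply_div_ne (hN : N = 2 * u * n) (hu : 0 < u)
    (hgB : IsBlockRotation (2 * u) gB) {z : ZMod N} (hz : z.val % u + 1 = u) :
    (gB z).val / u ≠ z.val / u := by
  rw [hgB.val_apply ⟨n, hN⟩]
  set v := z.val
  have hmod : v % (2 * u) = v % u + u * (v / u % 2) := by rw [mul_comm 2 u]; exact Nat.mod_mul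
  have hdiv : v / (2 * u) = v / u / 2 := by rw [mul_comm, Nat.div_div_eq_div_mul]
  rw [hmod, hdiv]
  rcases Nat.mod_two_eq_zero_or_one (v / u) with he | he
  · rw [he, mul_zero, add_zero, hz, Nat.mod_eq_of_lt (by omega : u < 2 * u),
      show v / u / 2 * (2 * u) + u = (v / u / 2 * 2 + 1) * u by ring, Nat.mul_div_cancel _ hu]
    omega
  · rw [he, mul_one, show v % u + u + 1 = 2 * u by omega, Nat.mod_self, add_zero,
      show v / u / 2 * (2 * u) = v / u / 2 * 2 * u by ring, Nat.mul_div_cancel _ hu]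
    omega

theorem IsBlockRotation.apply_ne_iff (hN : N = 2 * u * n) (hu : 0 < u)
    (hgB : IsBlockRotation (2 * u) gB) (hX : IsBlockRotation u X) {z : ZMod N} :
    gB z ≠ X z ↔ z.val % u + 1 = u := by
  have hlt := Nat.mod_lt z.val hu
  have hdvd : u ∣ N := ⟨2 * n, by rw [hN]; ring⟩
  refine ⟨fun hne => ?_, fun hz heq => hgB.val_apply_div_ne hN hu hz ?_⟩
  · by_contra hz
    have h2 : z.val % (2 * u) + 1 < 2 * u := by
      rw [mul_comm 2 u, Nat.mod_mul]
      rcases Nat.mod_two_eq_zero_or_one (z.val / u) with he | he <;> rw [he] <;> omega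
    refine hne (ZMod.val_injective N ?_)
    rw [hgB.val_apply_of_mod_add_one_lt ⟨n, hN⟩ h2,
      hX.val_apply_of_mod_add_one_lt hdvd (by omega)]
  · rw [heq, hX.val_apply_div hdvd]


theorem IsBlockRotation.two_mul_le_card_filter_apply_ne (hN : N = 2 * u * n) (hu : 0 < u)
    (hgB : IsBlockRotation (2 * u) gB) (hX : IsBlockRotation u X) :
    2 * n ≤ #{z | gB z ≠ X z} := by
  have hval : ∀ j < 2 * n, (((j * u + (u - 1) : ℕ) : ZMod N)).val = j * u + (u - 1) := by
    intro j hj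
    refine ZMod.val_cast_of_lt ?_
    calc j * u + (u - 1) < (j + 1) * u := by rw [add_one_mul]; omega
      _ ≤ 2 * n * u := Nat.mul_le_mul_right u hj
      _ = N := by rw [hN]; ring
  have hmaps : Set.MapsTo (fun j => ((j * u + (u - 1) : ℕ) : ZMod N)) (Finset.range (2 * n))
      ({z | gB z ≠ X z} : Finset (ZMod N)) := by
    intro j hj
    rw [Finset.coe_range, Set.mem_Iio] at hj
    rw [Finset.mem_coe, Finset.mem_filter, hgB.apply_ne_iff hN hu hX, hval j hj,
      Nat.mul_add_mod_of_lt (by omega : u - 1 < u)]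
    exact ⟨Finset.mem_univ _, by omega⟩
  have hinj : Set.InjOn (fun j => ((j * u + (u - 1) : ℕ) : ZMod N)) (Finset.range (2 * n)) := by
    intro i hi j hj hij
    rw [Finset.coe_range, Set.mem_Iio] at hi hj
    have := congrArg (fun z : ZMod N => z.val / u) hij
    simpa only [hval i hi, hval j hj, Nat.mul_add_div_of_lt (by omega : u - 1 < u)] using this
  simpa using Finset.card_le_card_of_injOn _ hmaps hinj

theorem IsBlockRotation.eq_of_cycleCount_eq (hN : N = 2 * u * n) (hu : 0 < u)
    (hgB : IsBlockRotation (2 * u) gB) (hX : IsBlockRotation u X) {g : Perm (ZMod N)}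
    (hgeo : g ∈ geodesic gB 1) (hgX : ∀ x y, g.SameCycle x y → X.SameCycle x y)
    (hcg : cycleCount g = 2 * n) : g = X := by
  have hdvd : u ∣ N := ⟨2 * n, by rw [hN]; ring⟩
  have hcayley : cayley g gB = n := by
    have hcB : cycleCount gB = n := by
      rw [hgB.cycleCount_eq ⟨n, hN⟩, hN, Nat.mul_div_cancel_left _ (by omega)]
    have := cycleCount_le_card g
    simp only [geodesic, Set.mem_ofPred_eq, cayley_one_right, Nat.card_zmod] at hgeo this
    rw [cayley_comm]
    omega
  refine eq_of_sameCycle_of_two_mul_cayley_le (B := gB)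
    (fun x => hgX _ _ (sameCycle_apply_right.mpr .rfl)) (fun x hx => ?_)
    (fun x y hx hy hxy => ?_) (hcayley ▸ hgB.two_mul_le_card_filter_apply_ne hN hu hX)
  · rw [hX.sameCycle_iff hdvd]
    exact (hgB.val_apply_div_ne hN hu ((hgB.apply_ne_iff hN hu hX).mp hx)).symm
  · rw [hX.sameCycle_iff hdvd] at hxy
    rw [hgB.apply_ne_iff hN hu hX] at hx hy
    have hx' := Nat.div_add_mod' x.val u
    have hy' := Nat.div_add_mod' y.val u
    rw [hxy] at hx'
    exact ZMod.val_injective N (by omega)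

end HalfBlocks

/-- `X` is the unique element of `Γ(g_A,e) ∩ Γ(g_B,e)` of maximal distance `n(m-2)`
from the identity; equivalently of minimal distance `n` from `g_A`. -/
theorem stmt15 (n m : ℕ) (hn : 2 ≤ n) (hm : 2 ≤ m) (hme : Even m)
    (gB gA X : Equiv.Perm (ZMod (m * n)))
(hgB : ∀ q r : ℕ, r < m →
      gB ((q * m + r : ℕ) : ZMod (m * n)) = ((q * m + (r + 1) % m : ℕ) : ZMod (m * n)))
    (hgA : gA = Equiv.addLeft ((m / 2 : ℕ) : ZMod (m * n)) * gB *
      (Equiv.addLeft ((m / 2 : ℕ) : ZMod (m * n)))⁻¹)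
(hX : ∀ q r : ℕ, r < m / 2 →
      X ((q * (m / 2) + r : ℕ) : ZMod (m * n)) =
        ((q * (m / 2) + (r + 1) % (m / 2) : ℕ) : ZMod (m * n)))
    :
    ∀ g ∈ geodesic gA 1 ∩ geodesic gB 1,
      (cayley g 1 ≤ n * (m - 2) ∧ (cayley g 1 = n * (m - 2) ↔ g = X)) ∧
      (n ≤ cayley g gA ∧ (cayley g gA = n ↔ g = X)) := by
  rintro g ⟨hgeoA, hgeoB⟩
  obtain ⟨u, rfl⟩ := hme.two_dvd
  rw [Nat.mul_div_cancel_left u two_pos] at hX hgA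
  have hu : 0 < u := by omega
  have : NeZero (2 * u * n) := ⟨by positivity⟩
  change IsBlockRotation (2 * u) gB at hgB
  change IsBlockRotation u X at hX
  have hgX : ∀ x y, g.SameCycle x y → X.SameCycle x y := fun x y h =>
    (hX.sameCycle_iff ⟨2 * n, by ring⟩).mpr <| hgB.val_div_eq_of_sameCycle rfl hn hu hgA
      (sameCycle_of_mem_geodesic_one hgeoB h) (sameCycle_of_mem_geodesic_one hgeoA h)
  have hcX : cycleCount X = 2 * n := by
    rw [hX.cycleCount_eq ⟨2 * n, by ring⟩, show 2 * u * n = u * (2 * n) by ring,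
      Nat.mul_div_cancel_left _ hu]
  have hcA : cycleCount gA = n := by
    rw [hgA, cycleCount_conj, hgB.cycleCount_eq ⟨n, rfl⟩, Nat.mul_div_cancel_left _ (by omega)]
  have hcg : 2 * n ≤ cycleCount g := hcX ▸ cycleCount_le_of_sameCycle hgX
  have hiff : cycleCount g = 2 * n ↔ g = X :=
    ⟨hgB.eq_of_cycleCount_eq rfl hu hX hgeoB hgX, fun h => h ▸ hcX⟩
  have hgN := cycleCount_le_card g
  simp only [geodesic, Set.mem_ofPred_eq, cayley_one_right, Nat.card_zmod, hcA] at hgeoA hgN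
  rw [cayley_one_right, cayley_comm, Nat.card_zmod, ← hiff]
  have hbound : n * (2 * u - 2) = 2 * u * n - 2 * n := by rw [Nat.mul_sub, mul_comm]; ring_nf
  omega
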